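/- Let G be a finite connected simple graph, ω0 an acyclic orientation of G, and s0 ≥ 0, p > 0 such that ω_{s+p} = ω_s for all s ≥ s0, with m the common number of times each vertex is a sink per period. Assign to each vertex v the color set C_v = { s − s0 : s0 ≤ s < s0 + p and v is a sink of ω_s } ⊆ {0, …, p−1}. Then |C_v| = m for every vertex v, and for every edge {u,v} of G the sets C_u and C_v are disjoint and interleaved: writing C_u = {c_u^1 < … < c_u^m} and C_v = {c_v^1 < … < c_v^m}, either c_u^1 < c_v^1 < c_u^2 < c_v^2 < … < c_u^m < c_v^m, or the same chain of inequalities holds with the roles of u and v interchanged. (Thus the choice of ω0 induces an m(ω0)-tuple coloring of G with p(ω0) interleaved colors.) -/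
import Mathlib


variable {V : Type*}

/-- `o` is an orientation of the simple graph `G`: it assigns a direction to each
edge of `G` (for adjacent `u, v`, exactly one of `o u v`, `o v u` holds) and relates
no other pairs. -/
def IsOrientation (G : SimpleGraph V) (o : V → V → Prop) : Prop :=
  ∀ u v, (o u v → G.Adj u v) ∧ (G.Adj u v → (o u v ↔ ¬ o v u))

/-- A sink of an orientation: a vertex with no outgoing edge (every incident edge is
directed toward it). -/
def IsSink (o : V → V → Prop) (v : V) : Prop := ∀ u, ¬ o v u

/-- A directed graph (or orientation) is acyclic when it has no directed cycle. -/
def DirAcyclic (o : V → V → Prop) : Prop := ∀ v, ¬ Relation.TransGen o v v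

/-- The synchronous edge-reversal step: every edge incident to a sink is reversed
(every sink becomes a source); all other edges keep their direction. -/
def revStep (o : V → V → Prop) : V → V → Prop :=
  fun u v => (o u v ∧ ¬ IsSink o v) ∨ (o v u ∧ IsSink o u)

/-- The sequence of orientations produced by synchronous edge reversal:
`orientSeq ω0 s` is the result of `s` edge-reversal steps applied to `ω0`. -/
def orientSeq (ω0 : V → V → Prop) (s : ℕ) : V → V → Prop := revStep^[s] ω0

attribute [local instance] Classical.propDecidable

/-- The color set of vertex `v`: the set `{ s − s0 : s0 ≤ s < s0 + p, v is a sink of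
ω_s } ⊆ {0, …, p − 1}`. -/
noncomputable def colorSet (ω0 : V → V → Prop) (s0 p : ℕ) (v : V) : Finset ℕ :=
  (Finset.range p).filter (fun t => IsSink (orientSeq ω0 (s0 + t)) v)

/-- Two lists of `m` colors each, sorted increasingly, are interleaved as
`A 0 < B 0 < A 1 < B 1 < ⋯ < A (m−1) < B (m−1)`. -/
def InterleavedLists (A B : List ℕ) (m : ℕ) : Prop :=
  (∀ i, i < m → A.getD i 0 < B.getD i 0) ∧
    ∀ i, i + 1 < m → B.getD i 0 < A.getD (i + 1) 0


section Aux

variable {G : SimpleGraph V} {o : V → V → Prop} {u v : V}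

lemma sink_edge (hor : IsOrientation G o) (hadj : G.Adj u v) (hu : IsSink o u) : o v u := by
  by_contra hvu
  exact hu v (((hor u v).2 hadj).mpr hvu)

lemma sink_not_adj (hor : IsOrientation G o) (hadj : G.Adj u v)
    (hu : IsSink o u) (hv : IsSink o v) : False :=
  hv u (sink_edge hor hadj hu)

lemma revStep_orientation (hor : IsOrientation G o) : IsOrientation G (revStep o) := by
  intro u v
  constructor
  · rintro (⟨h, -⟩ | ⟨h, -⟩)
    · exact (hor u v).1 h
    · exact ((hor v u).1 h).symm
  · intro hadj
    by_cases huv : o u v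
    · have hvu : ¬ o v u := ((hor u v).2 hadj).mp huv
      have hu : ¬ IsSink o u := fun h => h v huv
      simp only [revStep]
      tauto
    · have hvu : o v u := by
        have := (hor u v).2 hadj
        tauto
      have hv : ¬ IsSink o v := fun h => h u hvu
      simp only [revStep]
      tauto

variable {ω0 : V → V → Prop}

lemma orientSeq_succ (ω0 : V → V → Prop) (s : ℕ) :
    orientSeq ω0 (s + 1) = revStep (orientSeq ω0 s) :=
  Function.iterate_succ_apply' _ _ _

lemma orientSeq_orientation (hor : IsOrientation G ω0) (s : ℕ) :
    IsOrientation G (orientSeq ω0 s) := by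
  induction s with
  | zero => exact hor
  | succ n ih => rw [orientSeq_succ]; exact revStep_orientation ih

lemma sink_next_edge (hor : IsOrientation G ω0) (hadj : G.Adj u v) {s : ℕ}
    (hu : IsSink (orientSeq ω0 s) u) : orientSeq ω0 (s + 1) u v := by
  rw [orientSeq_succ]
  exact Or.inr ⟨sink_edge (orientSeq_orientation hor s) hadj hu, hu⟩

lemma edge_persist (hor : IsOrientation G ω0) (hadj : G.Adj u v) :
    ∀ n s, orientSeq ω0 s u v → orientSeq ω0 (s + n) v u →
      ∃ r, s ≤ r ∧ r < s + n ∧ IsSink (orientSeq ω0 r) v := by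
  intro n
  induction n with
  | zero =>
    intro s h1 h2
    exact absurd h2 (((orientSeq_orientation hor s u v).2 hadj).mp h1)
  | succ n ih =>
    intro s h1 h2
    by_cases hs : IsSink (orientSeq ω0 s) v
    · exact ⟨s, le_refl _, by omega, hs⟩
    · have h1' : orientSeq ω0 (s + 1) u v := by
        rw [orientSeq_succ]; exact Or.inl ⟨h1, hs⟩
      have h2' : orientSeq ω0 (s + 1 + n) v u := (by omega : s + (n+1) = s + 1 + n) ▸ h2
      obtain ⟨r, hr1, hr2, hr3⟩ := ih (s + 1) h1' h2'
      exact ⟨r, by omega, by omega, hr3⟩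

lemma alternation (hor : IsOrientation G ω0) (hadj : G.Adj u v) {s t : ℕ} (hst : s < t)
    (hu1 : IsSink (orientSeq ω0 s) u) (hu2 : IsSink (orientSeq ω0 t) u) :
    ∃ r, s < r ∧ r < t ∧ IsSink (orientSeq ω0 r) v := by
  have h1 : orientSeq ω0 (s + 1) u v := sink_next_edge hor hadj hu1
  have h2 : orientSeq ω0 t v u := sink_edge (orientSeq_orientation hor t) hadj hu2
  have h2' : orientSeq ω0 (s + 1 + (t - (s + 1))) v u := (by omega : t = s + 1 + (t - (s+1))) ▸ h2
  obtain ⟨r, hr1, hr2, hr3⟩ := edge_persist hor hadj (t - (s + 1)) (s + 1) h1 h2'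
  exact ⟨r, by omega, by omega, hr3⟩

end Aux

lemma sort_getD {s : Finset ℕ} {m : ℕ} (h : s.card = m) (i : Fin m) :
    (s.sort (· ≤ ·)).getD i 0 = s.orderEmbOfFin h i := by
  rw [Finset.orderEmbOfFin_apply]
  exact List.getD_eq_getElem _ _ (by rw [Finset.length_sort, h]; exact i.2)

/-- The choice of the initial acyclic orientation `ω0` induces an `m`-tuple coloring of
`G` with `p` interleaved colors: each vertex gets `m` of the colors `{0, …, p − 1}`,
and the color sets of adjacent vertices are disjoint and interleaved. -/
theorem edge_reversal_interleaved_coloring [Fintype V]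
    (G : SimpleGraph V) (hG : G.Connected)
    (ω0 : V → V → Prop) (hor : IsOrientation G ω0) (hacy : DirAcyclic ω0)
    (s0 p m : ℕ) (hp : 0 < p)
    (hper : ∀ s, s0 ≤ s → orientSeq ω0 (s + p) = orientSeq ω0 s)
    (hm : ∀ v : V, {s ∈ Set.Ico s0 (s0 + p) | IsSink (orientSeq ω0 s) v}.ncard = m) :
    (∀ v : V, (colorSet ω0 s0 p v).card = m) ∧
      ∀ u v : V, G.Adj u v →
        Disjoint (colorSet ω0 s0 p u) (colorSet ω0 s0 p v) ∧
          (InterleavedLists ((colorSet ω0 s0 p u).sort (· ≤ ·))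
              ((colorSet ω0 s0 p v).sort (· ≤ ·)) m ∨
            InterleavedLists ((colorSet ω0 s0 p v).sort (· ≤ ·))
              ((colorSet ω0 s0 p u).sort (· ≤ ·)) m) := by
  classical
  have memC : ∀ (w : V) (t : ℕ), t ∈ colorSet ω0 s0 p w ↔
      t < p ∧ IsSink (orientSeq ω0 (s0 + t)) w := by
    intro w t
    simp [colorSet]
  have cardeq : ∀ w : V, (colorSet ω0 s0 p w).card = m := by
    intro w
    rw [← hm w]
    have hset : {s ∈ Set.Ico s0 (s0 + p) | IsSink (orientSeq ω0 s) w}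
        = ↑((Finset.Ico s0 (s0 + p)).filter (fun s => IsSink (orientSeq ω0 s) w)) := by
      ext s
      simp [Set.mem_Ico, and_comm]
    rw [hset, Set.ncard_coe_finset]
    apply Finset.card_bij (fun t _ => s0 + t)
    · intro t ht
      rw [memC] at ht
      simp only [Finset.mem_filter, Finset.mem_Ico]
      exact ⟨⟨by omega, by omega⟩, ht.2⟩
    · intro t1 h1 t2 h2 h
      omega
    · intro s hs
      simp only [Finset.mem_filter, Finset.mem_Ico] at hs
      refine ⟨s - s0, ?_, by omega⟩
      rw [memC]
      constructor
      · omega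
      · rw [(by omega : s0 + (s - s0) = s)]
        exact hs.2
  refine ⟨cardeq, ?_⟩
  intro u v hadj
  constructor
  · rw [Finset.disjoint_left]
    intro t htu htv
    rw [memC] at htu htv
    exact sink_not_adj (orientSeq_orientation hor (s0 + t)) hadj htu.2 htv.2
  · have between : ∀ {w w' : V}, G.Adj w w' → ∀ x y, x ∈ colorSet ω0 s0 p w →
        y ∈ colorSet ω0 s0 p w → x < y → ∃ z ∈ colorSet ω0 s0 p w', x < z ∧ z < y := by
      intro w w' hww x y hx hy hxy
      rw [memC] at hx hy
      obtain ⟨r, hr1, hr2, hr3⟩ := alternation hor hww (show s0 + x < s0 + y by omega) hx.2 hy.2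
      refine ⟨r - s0, ?_, by omega, by omega⟩
      rw [memC]
      refine ⟨by omega, ?_⟩
      rw [(by omega : s0 + (r - s0) = r)]
      exact hr3
    have wrap : ∀ {w w' : V}, G.Adj w w' → ∀ x y, x ∈ colorSet ω0 s0 p w →
        y ∈ colorSet ω0 s0 p w → ∃ z ∈ colorSet ω0 s0 p w', y < z ∨ z < x := by
      intro w w' hww x y hx hy
      rw [memC] at hx hy
      have hper' : IsSink (orientSeq ω0 (s0 + x + p)) w := by
        rw [hper (s0 + x) (by omega)]; exact hx.2
      obtain ⟨r, hr1, hr2, hr3⟩ := alternation hor hww (show s0 + y < s0 + x + p by omega) hy.2 hper'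
      by_cases hc : r < s0 + p
      · refine ⟨r - s0, ?_, Or.inl (by omega)⟩
        rw [memC]
        exact ⟨by omega, by rw [(by omega : s0 + (r - s0) = r)]; exact hr3⟩
      · refine ⟨r - p - s0, ?_, Or.inr (by omega)⟩
        rw [memC]
        refine ⟨by omega, ?_⟩
        have hpp : orientSeq ω0 (r - p + p) = orientSeq ω0 (r - p) := hper (r - p) (by omega)
        rw [(by omega : s0 + (r - p - s0) = r - p), ← hpp, (by omega : r - p + p = r)]
        exact hr3
    by_cases hm0 : m = 0
    · subst hm0
      left
      exact ⟨fun i hi => by omega, fun i hi => by omega⟩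
    have hm1 : 0 < m := Nat.pos_of_ne_zero hm0
    have cA : (colorSet ω0 s0 p u).card = m := cardeq u
    have cB : (colorSet ω0 s0 p v).card = m := cardeq v
    set a := (colorSet ω0 s0 p u).orderEmbOfFin cA with ha
    have haA : ∀ i, a i ∈ colorSet ω0 s0 p u := fun i =>
      Finset.orderEmbOfFin_mem (colorSet ω0 s0 p u) cA i
    obtain ⟨z, hzB, hz⟩ := wrap hadj (a ⟨0, hm1⟩) (a ⟨m - 1, by omega⟩) (haA _) (haA _)
    rcases hz with hgt | hlt
    · -- u's colors come first
      have exwit : ∀ i : Fin m, ∃ zb, zb ∈ colorSet ω0 s0 p v ∧ a i < zb ∧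
          ∀ h : (i : ℕ) + 1 < m, zb < a ⟨(i : ℕ) + 1, h⟩ := by
        intro i
        by_cases h : (i : ℕ) + 1 < m
        · obtain ⟨zb, hzb, h1, h2⟩ := between hadj (a i) (a ⟨(i : ℕ) + 1, h⟩) (haA i) (haA _)
            (a.strictMono (show i < ⟨(i : ℕ) + 1, h⟩ from by simp [Fin.lt_def]))
          exact ⟨zb, hzb, h1, fun _ => h2⟩
        · have hi : i = ⟨m - 1, by omega⟩ := Fin.ext (by simp; omega)
          refine ⟨z, hzB, ?_, fun h' => absurd h' h⟩
          rw [hi]; exact hgt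
      choose g hg1 hg2 hg3 using exwit
      have gmono : StrictMono g := by
        intro i j hij
        have h1 : (i : ℕ) + 1 < m := by
          have := j.2
          have : (i : ℕ) < (j : ℕ) := hij
          omega
        calc g i < a ⟨(i : ℕ) + 1, h1⟩ := hg3 i h1
          _ ≤ a j := a.monotone (show (⟨(i : ℕ) + 1, h1⟩ : Fin m) ≤ j from by
              simp [Fin.le_def]; exact hij)
          _ < g j := hg2 j
      have hgb : g = (colorSet ω0 s0 p v).orderEmbOfFin cB :=
        Finset.orderEmbOfFin_unique cB hg1 gmono
      left
      constructor
      · intro i hi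
        rw [sort_getD cA ⟨i, hi⟩, sort_getD cB ⟨i, hi⟩, ← hgb]
        exact hg2 ⟨i, hi⟩
      · intro i hi
        rw [sort_getD cB ⟨i, by omega⟩, sort_getD cA ⟨i + 1, hi⟩, ← hgb]
        exact hg3 ⟨i, by omega⟩ hi
    · -- v's colors come first
      have exwit : ∀ i : Fin m, ∃ zb, zb ∈ colorSet ω0 s0 p v ∧ zb < a i ∧
          ∀ _ : 0 < (i : ℕ), a ⟨(i : ℕ) - 1, lt_of_le_of_lt (Nat.sub_le _ _) i.2⟩ < zb := by
        intro i
        by_cases h : 0 < (i : ℕ)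
        · obtain ⟨zb, hzb, h1, h2⟩ := between hadj (a ⟨(i : ℕ) - 1, lt_of_le_of_lt (Nat.sub_le _ _) i.2⟩) (a i)
            (haA _) (haA i) (a.strictMono (show (⟨(i : ℕ) - 1, lt_of_le_of_lt (Nat.sub_le _ _) i.2⟩ : Fin m) < i from by
              simp [Fin.lt_def]; omega))
          exact ⟨zb, hzb, h2, fun _ => h1⟩
        · have hi : i = ⟨0, hm1⟩ := Fin.ext (by simp; omega)
          refine ⟨z, hzB, ?_, fun h' => absurd h' h⟩
          rw [hi]; exact hlt
      choose g hg1 hg2 hg3 using exwit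
      have gmono : StrictMono g := by
        intro i j hij
        have hj : 0 < (j : ℕ) := by
          have : (i : ℕ) < (j : ℕ) := hij
          omega
        calc g i < a i := hg2 i
          _ ≤ a ⟨(j : ℕ) - 1, lt_of_le_of_lt (Nat.sub_le _ _) j.2⟩ := a.monotone (show i ≤ (⟨(j : ℕ) - 1, lt_of_le_of_lt (Nat.sub_le _ _) j.2⟩ : Fin m)
              from by simp [Fin.le_def]; omega)
          _ < g j := hg3 j hj
      have hgb : g = (colorSet ω0 s0 p v).orderEmbOfFin cB :=
        Finset.orderEmbOfFin_unique cB hg1 gmono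
      right
      constructor
      · intro i hi
        rw [sort_getD cB ⟨i, hi⟩, sort_getD cA ⟨i, hi⟩, ← hgb]
        exact hg2 ⟨i, hi⟩
      · intro i hi
        rw [sort_getD cA ⟨i, by omega⟩, sort_getD cB ⟨i + 1, hi⟩, ← hgb]
        exact hg3 ⟨i + 1, hi⟩ (Nat.succ_pos i)
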